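/- Let F, G be positive integers, let C ∈ ℝ^{F×G} have nonnegative entries, and let ε ≥ 0, η ≥ 0. Define S : ℂ^F → ℝ by S(x) = inf{ ⟨C, M⟩ + ε·D(M) + η·‖M‖_{∞,1} : M ∈ ℝ^{F×G}, M ≥ 0, (M·1_G)_f ≥ |x_f| for all f }. Then S is a convex function on ℂ^F (viewed as a real vector space): for all x, y ∈ ℂ^F and t ∈ [0, 1], S(t·x + (1−t)·y) ≤ t·S(x) + (1−t)·S(y). -/

import Mathlib

open scoped BigOperators

/-- Entropy term `D(M) = Σ_{f,g} (M_{f,g} log M_{f,g} − M_{f,g} + 1)`. -/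
noncomputable def entD {F G : ℕ} (M : Matrix (Fin F) (Fin G) ℝ) : ℝ :=
  ∑ f, ∑ g, (M f g * Real.log (M f g) - M f g + 1)

/-- Mixed norm `‖M‖_{∞,1} = Σ_g max_f |M_{f,g}|`. -/
noncomputable def mixedInfOne {F G : ℕ} (M : Matrix (Fin F) (Fin G) ℝ) : ℝ :=
  ∑ g, ⨆ f, |M f g|

/-- Frobenius inner product `⟨C, M⟩ = Σ_{f,g} C_{f,g} M_{f,g}`. -/
def frob {F G : ℕ} (C M : Matrix (Fin F) (Fin G) ℝ) : ℝ :=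
  ∑ f, ∑ g, C f g * M f g

/-!
Row-sum domination `‖x f‖ ≤ ∑ g, M f g` is jointly convex in `(x, M)` because the modulus is
convex (the equality constraint `∑ g, M f g = ‖x f‖` is not). The cost
`⟨C, M⟩ + ε D(M) + η ‖M‖_{∞,1}` is convex on nonnegative matrices, as `D` is a sum of
`a ↦ a log a - a + 1` and `‖·‖_{∞,1}` a sum of maxima of absolute values. Hence if `M` dominates
`x` and `N` dominates `y`, then `t M + (1 - t) N` dominates `t x + (1 - t) y` at cost at most
`t cost(M) + (1 - t) cost(N)`; taking infima over `M` and `N` gives convexity of `S`.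
-/

open Set InformationTheory
open scoped Pointwise

section ConvexFunctions

variable {X E : Type*} [AddCommMonoid X] [Module ℝ X] [AddCommMonoid E] [Module ℝ E]

theorem ConvexOn.sInf_image_fiber {s : Set E} {Φ : E → ℝ} (hΦ : ConvexOn ℝ s Φ)
    {R : X → E → Prop} (hR : Convex ℝ {p : X × E | R p.1 p.2}) (hRs : ∀ x M, R x M → M ∈ s)
    (hbdd : BddBelow (Φ '' s)) (hne : ∀ x, ∃ M, R x M) :
    ConvexOn ℝ univ fun x => sInf (Φ '' {M | R x M}) := by
  have hfib_bdd : ∀ x, BddBelow (Φ '' {M | R x M}) := fun x =>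
    hbdd.mono (image_mono fun M hM => hRs _ _ hM)
  have hfib_ne : ∀ x, (Φ '' {M | R x M}).Nonempty := fun x =>
    (nonempty_def.2 (hne x)).image Φ
  refine ⟨convex_univ, fun x _ y _ a b ha hb hab => ?_⟩
  dsimp only
  have hlower : ∀ c ∈ a • Φ '' {M | R x M} + b • Φ '' {N | R y N},
      sInf (Φ '' {P | R (a • x + b • y) P}) ≤ c := by
    rintro _ ⟨_, ⟨_, ⟨M, hM, rfl⟩, rfl⟩, _, ⟨_, ⟨N, hN, rfl⟩, rfl⟩, rfl⟩
    have hMN : R (a • x + b • y) (a • M + b • N) :=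
      hR (x := (x, M)) hM (y := (y, N)) hN ha hb hab
    calc sInf (Φ '' {P | R (a • x + b • y) P}) ≤ Φ (a • M + b • N) :=
          csInf_le (hfib_bdd _) ⟨_, hMN, rfl⟩
      _ ≤ a • Φ M + b • Φ N := hΦ.2 (hRs _ _ hM) (hRs _ _ hN) ha hb hab
  calc sInf (Φ '' {P | R (a • x + b • y) P})
      ≤ sInf (a • Φ '' {M | R x M} + b • Φ '' {N | R y N}) :=
        le_csInf ((hfib_ne x).smul_set.add (hfib_ne y).smul_set) hlower
    _ = a • sInf (Φ '' {M | R x M}) + b • sInf (Φ '' {N | R y N}) := by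
        rw [csInf_add (hfib_ne x).smul_set ((hfib_bdd x).smul_of_nonneg ha)
          (hfib_ne y).smul_set ((hfib_bdd y).smul_of_nonneg hb),
          Real.sInf_smul_of_nonneg ha, Real.sInf_smul_of_nonneg hb]

theorem convexOn_finsetSum {ι : Type*} {s : Set E} (hs : Convex ℝ s) (t : Finset ι)
    {φ : ι → E → ℝ} (hφ : ∀ i ∈ t, ConvexOn ℝ s (φ i)) :
    ConvexOn ℝ s fun x => ∑ i ∈ t, φ i x := by
  classical
  induction t using Finset.induction_on with
  | empty => simpa using convexOn_const 0 hs
  | insert i t hi ih =>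
    simp only [Finset.sum_insert hi]
    exact (hφ i (Finset.mem_insert_self i t)).add
      (ih fun j hj => hφ j (Finset.mem_insert_of_mem hj))

theorem convexOn_iSup_of_nonneg {ι : Type*} [Finite ι] {s : Set E} (hs : Convex ℝ s)
    {φ : ι → E → ℝ} (hφ : ∀ i, ConvexOn ℝ s (φ i)) (hφ₀ : ∀ i x, 0 ≤ φ i x) :
    ConvexOn ℝ s fun x => ⨆ i, φ i x := by
  refine ⟨hs, fun x hx y hy a b ha hb hab => ?_⟩
  refine Real.iSup_le (fun i => ?_) ?_
  · calc φ i (a • x + b • y) ≤ a • φ i x + b • φ i y := (hφ i).2 hx hy ha hb hab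
      _ ≤ a • (⨆ j, φ j x) + b • ⨆ j, φ j y := by
        gcongr
        exacts [le_ciSup (Finite.bddAbove_range (φ · x)) i,
          le_ciSup (Finite.bddAbove_range (φ · y)) i]
  · have := Real.iSup_nonneg (hφ₀ · x)
    have := Real.iSup_nonneg (hφ₀ · y)
    positivity

end ConvexFunctions

section NonnegMatrices

variable {m n : Type*}

def nonnegMatrices (m n : Type*) : Set (Matrix m n ℝ) := {M | ∀ i j, 0 ≤ M i j}

theorem convex_nonnegMatrices : Convex ℝ (nonnegMatrices m n) :=
  fun M hM N hN a b ha hb _ i j => by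
    simp only [Matrix.add_apply, Matrix.smul_apply, smul_eq_mul]
    have := hM i j; have := hN i j
    positivity

theorem ConvexOn.comp_matrixEntry {φ : ℝ → ℝ} (hφ : ConvexOn ℝ (Ici 0) φ) (i : m) (j : n) :
    ConvexOn ℝ (nonnegMatrices m n) fun M => φ (M i j) :=
  (hφ.comp_linearMap (Matrix.entryLinearMap ℝ ℝ i j)).subset (fun _ hM => hM i j)
    convex_nonnegMatrices

end NonnegMatrices

section TransportCost

variable {F G : ℕ}

noncomputable def transportCost (C : Matrix (Fin F) (Fin G) ℝ) (ε η : ℝ)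
    (M : Matrix (Fin F) (Fin G) ℝ) : ℝ :=
  frob C M + ε * entD M + η * mixedInfOne M

theorem entD_eq_sum_klFun (M : Matrix (Fin F) (Fin G) ℝ) :
    entD M = ∑ f, ∑ g, klFun (M f g) := by
  simp only [entD, klFun]
  ring_nf

theorem convexOn_frob (C : Matrix (Fin F) (Fin G) ℝ) :
    ConvexOn ℝ (nonnegMatrices (Fin F) (Fin G)) (frob C) :=
  convexOn_finsetSum convex_nonnegMatrices _ fun f _ =>
    convexOn_finsetSum convex_nonnegMatrices _ fun g _ =>
      ((LinearMap.mul ℝ ℝ (C f g)).convexOn (convex_Ici 0)).comp_matrixEntry f g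

theorem convexOn_entD : ConvexOn ℝ (nonnegMatrices (Fin F) (Fin G)) entD := by
  simp only [funext entD_eq_sum_klFun]
  exact convexOn_finsetSum convex_nonnegMatrices _ fun f _ =>
    convexOn_finsetSum convex_nonnegMatrices _ fun g _ => convexOn_klFun.comp_matrixEntry f g

theorem convexOn_mixedInfOne : ConvexOn ℝ (nonnegMatrices (Fin F) (Fin G)) mixedInfOne :=
  convexOn_finsetSum convex_nonnegMatrices _ fun g _ =>
    convexOn_iSup_of_nonneg convex_nonnegMatrices (fun f =>
        ((convexOn_norm (convex_Ici 0)).congr fun a _ => Real.norm_eq_abs a).comp_matrixEntry f g)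
      fun _ _ => abs_nonneg _

theorem convexOn_transportCost (C : Matrix (Fin F) (Fin G) ℝ) {ε η : ℝ} (hε : 0 ≤ ε)
    (hη : 0 ≤ η) :
    ConvexOn ℝ (nonnegMatrices (Fin F) (Fin G)) (transportCost C ε η) :=
  ((convexOn_frob C).add (convexOn_entD.smul hε)).add (convexOn_mixedInfOne.smul hη)

theorem transportCost_nonneg {C : Matrix (Fin F) (Fin G) ℝ} (hC : ∀ f g, 0 ≤ C f g) {ε η : ℝ}
    (hε : 0 ≤ ε) (hη : 0 ≤ η) {M : Matrix (Fin F) (Fin G) ℝ} (hM : M ∈ nonnegMatrices _ _) :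
    0 ≤ transportCost C ε η M := by
  have hfrob : 0 ≤ frob C M :=
    Finset.sum_nonneg fun f _ => Finset.sum_nonneg fun g _ => mul_nonneg (hC f g) (hM f g)
  have hentD : 0 ≤ entD M := by
    rw [entD_eq_sum_klFun]
    exact Finset.sum_nonneg fun f _ => Finset.sum_nonneg fun g _ => klFun_nonneg (hM f g)
  have hmixed : 0 ≤ mixedInfOne M :=
    Finset.sum_nonneg fun g _ => Real.iSup_nonneg fun f => abs_nonneg _
  unfold transportCost
  positivity

end TransportCost

section DominatingPlans

variable {m n V : Type*} [Fintype n] [SeminormedAddCommGroup V]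

def IsDominatingPlan (x : m → V) (M : Matrix m n ℝ) : Prop :=
  (∀ i j, 0 ≤ M i j) ∧ ∀ i, ‖x i‖ ≤ ∑ j, M i j

theorem convex_isDominatingPlan [NormedSpace ℝ V] :
    Convex ℝ {p : (m → V) × Matrix m n ℝ | IsDominatingPlan p.1 p.2} := by
  rintro ⟨x, M⟩ ⟨hM₀, hxM⟩ ⟨y, N⟩ ⟨hN₀, hyN⟩ a b ha hb hab
  refine ⟨convex_nonnegMatrices hM₀ hN₀ ha hb hab, fun i => ?_⟩
  calc ‖a • x i + b • y i‖ ≤ a * ‖x i‖ + b * ‖y i‖ := by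
        refine (norm_add_le _ _).trans_eq ?_
        rw [norm_smul_of_nonneg ha, norm_smul_of_nonneg hb]
    _ ≤ a * ∑ j, M i j + b * ∑ j, N i j := by gcongr; exacts [hxM i, hyN i]
    _ = ∑ j, (a • M + b • N) i j := by
        simp only [Matrix.add_apply, Matrix.smul_apply, smul_eq_mul, Finset.sum_add_distrib,
          Finset.mul_sum]

theorem exists_isDominatingPlan [Nonempty n] (x : m → V) :
    ∃ M : Matrix m n ℝ, IsDominatingPlan x M := by
  obtain ⟨j₀⟩ := ‹Nonempty n›
  refine ⟨fun i _ => ‖x i‖, fun i j => norm_nonneg _, fun i => ?_⟩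
  exact Finset.single_le_sum (f := fun _ => ‖x i‖) (fun _ _ => norm_nonneg _) (Finset.mem_univ j₀)

end DominatingPlans

theorem stmt19_general (F G : ℕ) (hG : 0 < G)
    (C : Matrix (Fin F) (Fin G) ℝ) (hC : ∀ f g, 0 ≤ C f g)
    (ε η : ℝ) (hε : 0 ≤ ε) (hη : 0 ≤ η)
    (S : (Fin F → ℂ) → ℝ)
    (hS : ∀ x : Fin F → ℂ, S x = sInf {y : ℝ | ∃ M : Matrix (Fin F) (Fin G) ℝ,
      (∀ f g, 0 ≤ M f g) ∧ (∀ f, ‖x f‖ ≤ ∑ g, M f g) ∧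
      y = frob C M + ε * entD M + η * mixedInfOne M}) :
    ∀ x y : Fin F → ℂ, ∀ t : ℝ, 0 ≤ t → t ≤ 1 →
      S (t • x + (1 - t) • y) ≤ t * S x + (1 - t) * S y := by
  have : Nonempty (Fin G) := Fin.pos_iff_nonempty.mp hG
  have hS_eq : S = fun x => sInf (transportCost C ε η '' {M | IsDominatingPlan x M}) := by
    funext x
    rw [hS x]
    congr 1
    ext y
    simp only [IsDominatingPlan, transportCost, mem_ofPred_eq, mem_image, and_assoc, eq_comm]
  have hconv : ConvexOn ℝ univ S := by
    rw [hS_eq]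
    exact (convexOn_transportCost C hε hη).sInf_image_fiber convex_isDominatingPlan
      (fun _ _ hM => hM.1) ⟨0, forall_mem_image.2 fun M hM => transportCost_nonneg hC hε hη hM⟩
      exists_isDominatingPlan
  intro x y t ht₀ ht₁
  simpa using hconv.2 (mem_univ x) (mem_univ y) ht₀ (sub_nonneg.2 ht₁) (add_sub_cancel t 1)

/-- the transport-based regularizer with the relaxed marginal
inequality constraint `M·1_G ≥ |x|` is convex in the complex amplitude
vector `x`. -/
theorem stmt19 (F G : ℕ) (hF : 0 < F) (hG : 0 < G)
    (C : Matrix (Fin F) (Fin G) ℝ) (hC : ∀ f g, 0 ≤ C f g)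
    (ε η : ℝ) (hε : 0 ≤ ε) (hη : 0 ≤ η)
    (S : (Fin F → ℂ) → ℝ)
    (hS : ∀ x : Fin F → ℂ, S x = sInf {y : ℝ | ∃ M : Matrix (Fin F) (Fin G) ℝ,
      (∀ f g, 0 ≤ M f g) ∧ (∀ f, ‖x f‖ ≤ ∑ g, M f g) ∧
      y = frob C M + ε * entD M + η * mixedInfOne M}) :
    ∀ x y : Fin F → ℂ, ∀ t : ℝ, 0 ≤ t → t ≤ 1 →
      S (t • x + (1 - t) • y) ≤ t * S x + (1 - t) * S y :=
  stmt19_general F G hG C hC ε η hε hη S hS
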